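/- arXiv:1108.2639 — 5 statements merged into one kernel-verified Lean document; each statement's English description precedes it below -/
import Mathlib

section
/- Let $\alpha_1(\mathbf{i}) \geq \alpha_2(\mathbf{i})$ denote the side lengths (base $b(\mathbf{i})$ and height $h(\mathbf{i})$ in some order) of rectangles satisfying $b(\mathbf{ij}) = b(\mathbf{i})b(\mathbf{j})$ and $h(\mathbf{ij}) = h(\mathbf{i})h(\mathbf{j})$. Fix $s_1, s_2 \geq 0$ and define $\psi^s(\mathbf{i}) = b(\mathbf{i})^{s_1} h(\mathbf{i})^{s-s_1}$ if $b(\mathbf{i}) \geq h(\mathbf{i})$ and $\psi^s(\mathbf{i}) = h(\mathbf{i})^{s_2} b(\mathbf{i})^{s-s_2}$ otherwise. Then for any $0 \leq s \leq s_1 + s_2$ and any $\mathbf{i}, \mathbf{j}$ with all side lengths in $(0,1)$, we have $\psi^s(\mathbf{ij}) \leq \psi^s(\mathbf{i}) \psi^s(\mathbf{j})$. -/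
/-- Submultiplicativity of the modified singular value function in the
separated case, for `0 ≤ s ≤ s₁ + s₂`. -/
theorem psi_submultiplicative_separated {W : Type*} [Mul W] (b h : W → ℝ)
    (hb : ∀ i, b i ∈ Set.Ioo (0:ℝ) 1) (hh : ∀ i, h i ∈ Set.Ioo (0:ℝ) 1)
    (hbm : ∀ i j, b (i * j) = b i * b j) (hhm : ∀ i j, h (i * j) = h i * h j)
    (s1 s2 : ℝ) (hs1 : 0 ≤ s1) (hs2 : 0 ≤ s2)
    (ψ : ℝ → W → ℝ)
    (hψ : ∀ s i, ψ s i =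
      if h i ≤ b i then b i ^ s1 * h i ^ (s - s1) else h i ^ s2 * b i ^ (s - s2))
    (s : ℝ) (hs0 : 0 ≤ s) (hs : s ≤ s1 + s2) (i j : W) :
    ψ s (i * j) ≤ ψ s i * ψ s j := by
  have hb' : ∀ i, 0 < b i := fun i => (hb i).1
  have hh' : ∀ i, 0 < h i := fun i => (hh i).1
  set t := s1 + s2 - s with ht
  have ht0 : 0 ≤ t := by simp only [ht]; linarith
  have fpos : ∀ k, 0 < b k ^ s1 * h k ^ (s - s1) := fun k =>
    mul_pos (Real.rpow_pos_of_pos (hb' k) _) (Real.rpow_pos_of_pos (hh' k) _)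
  have gpos : ∀ k, 0 < h k ^ s2 * b k ^ (s - s2) := fun k =>
    mul_pos (Real.rpow_pos_of_pos (hh' k) _) (Real.rpow_pos_of_pos (hb' k) _)
  have key : ∀ k, ψ s k = max (b k ^ s1 * h k ^ (s - s1)) (h k ^ s2 * b k ^ (s - s2)) := by
    intro k
    have he : b k ^ s1 * h k ^ (s - s1) * h k ^ t = h k ^ s2 * b k ^ (s - s2) * b k ^ t := by
      rw [mul_assoc, ← Real.rpow_add (hh' k), mul_assoc, ← Real.rpow_add (hb' k),
        show s - s1 + t = s2 by simp only [ht]; ring,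
        show s - s2 + t = s1 by simp only [ht]; ring, mul_comm]
    rw [hψ]
    by_cases hc : h k ≤ b k
    · rw [if_pos hc, max_eq_left]
      have hbt : h k ^ t ≤ b k ^ t := Real.rpow_le_rpow (hh' k).le hc ht0
      have hle : (h k ^ s2 * b k ^ (s - s2)) * b k ^ t
          ≤ (b k ^ s1 * h k ^ (s - s1)) * b k ^ t := by
        rw [← he]
        exact mul_le_mul_of_nonneg_left hbt (fpos k).le
      exact le_of_mul_le_mul_right hle (Real.rpow_pos_of_pos (hb' k) t)
    · rw [if_neg hc, max_eq_right]
      push_neg at hc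
      have hbt : b k ^ t ≤ h k ^ t := Real.rpow_le_rpow (hb' k).le hc.le ht0
      have hle : (b k ^ s1 * h k ^ (s - s1)) * h k ^ t
          ≤ (h k ^ s2 * b k ^ (s - s2)) * h k ^ t := by
        rw [he]
        exact mul_le_mul_of_nonneg_left hbt (gpos k).le
      exact le_of_mul_le_mul_right hle (Real.rpow_pos_of_pos (hh' k) t)
  rw [key, key, key]
  have fm : b (i*j) ^ s1 * h (i*j) ^ (s - s1)
      = (b i ^ s1 * h i ^ (s - s1)) * (b j ^ s1 * h j ^ (s - s1)) := by
    rw [hbm, hhm, Real.mul_rpow (hb' i).le (hb' j).le,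
      Real.mul_rpow (hh' i).le (hh' j).le]; ring
  have gm : h (i*j) ^ s2 * b (i*j) ^ (s - s2)
      = (h i ^ s2 * b i ^ (s - s2)) * (h j ^ s2 * b j ^ (s - s2)) := by
    rw [hbm, hhm, Real.mul_rpow (hb' i).le (hb' j).le,
      Real.mul_rpow (hh' i).le (hh' j).le]; ring
  rw [fm, gm]
  apply max_le
  · exact mul_le_mul (le_max_left _ _) (le_max_left _ _) (fpos j).le
      (le_trans (fpos i).le (le_max_left _ _))
  · exact mul_le_mul (le_max_right _ _) (le_max_right _ _) (gpos j).le
      (le_trans (gpos i).le (le_max_right _ _))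
end

section
/- With the same setup, if $s > s_1 + s_2$ then $\psi^s(\mathbf{ij}) \geq \psi^s(\mathbf{i})\psi^s(\mathbf{j})$ for all words $\mathbf{i}, \mathbf{j}$, i.e. $\psi^s$ is supermultiplicative in the separated case. -/
private lemma psi_key (s1 s2 s : ℝ) (hs1 : 0 ≤ s1) (hs2 : 0 ≤ s2) (hs : s1 + s2 < s)
    (x y : ℝ) (hx : 0 < x) (hy : 0 < y) (hxy : y ≤ x) :
    x ^ s1 * y ^ (s - s1) ≤ y ^ s2 * x ^ (s - s2) := by
  have h1 : y ^ (s - s1) = y ^ s2 * y ^ (s - s1 - s2) := by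
    rw [← Real.rpow_add hy]; ring_nf
  have h2 : x ^ (s - s2) = x ^ s1 * x ^ (s - s1 - s2) := by
    rw [← Real.rpow_add hx]; ring_nf
  rw [h1, h2]
  have hle : y ^ (s - s1 - s2) ≤ x ^ (s - s1 - s2) :=
    Real.rpow_le_rpow hy.le hxy (by linarith)
  have := mul_le_mul_of_nonneg_left hle (by positivity : (0:ℝ) ≤ x ^ s1 * y ^ s2)
  nlinarith [this]

private lemma psi_min (s1 s2 s : ℝ) (hs1 : 0 ≤ s1) (hs2 : 0 ≤ s2) (hs : s1 + s2 < s)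
    (x y : ℝ) (hx : 0 < x) (hy : 0 < y) :
    (if y ≤ x then x ^ s1 * y ^ (s - s1) else y ^ s2 * x ^ (s - s2))
      = min (x ^ s1 * y ^ (s - s1)) (y ^ s2 * x ^ (s - s2)) := by
  split_ifs with hc
  · exact (min_eq_left (psi_key s1 s2 s hs1 hs2 hs x y hx hy hc)).symm
  · exact (min_eq_right (psi_key s2 s1 s hs2 hs1 (by linarith) y x hy hx (le_of_not_ge hc))).symm

/-- For `s > s₁ + s₂` the modified singular value function is
supermultiplicative in the separated case. -/
theorem psi_supermultiplicative_separated {W : Type*} [Mul W] (b h : W → ℝ)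
    (hb : ∀ i, b i ∈ Set.Ioo (0:ℝ) 1) (hh : ∀ i, h i ∈ Set.Ioo (0:ℝ) 1)
    (hbm : ∀ i j, b (i * j) = b i * b j) (hhm : ∀ i j, h (i * j) = h i * h j)
    (s1 s2 : ℝ) (hs1 : 0 ≤ s1) (hs2 : 0 ≤ s2)
    (ψ : ℝ → W → ℝ)
    (hψ : ∀ s i, ψ s i =
      if h i ≤ b i then b i ^ s1 * h i ^ (s - s1) else h i ^ s2 * b i ^ (s - s2))
    (s : ℝ) (hs : s1 + s2 < s) (i j : W) :
    ψ s i * ψ s j ≤ ψ s (i * j) := by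
  obtain ⟨hbi, _⟩ := hb i
  obtain ⟨hbj, _⟩ := hb j
  obtain ⟨hhi, _⟩ := hh i
  obtain ⟨hhj, _⟩ := hh j
  obtain ⟨hbij, _⟩ := hb (i * j)
  obtain ⟨hhij, _⟩ := hh (i * j)
  have e1 : ψ s i = min (b i ^ s1 * h i ^ (s - s1)) (h i ^ s2 * b i ^ (s - s2)) := by
    rw [hψ]; exact psi_min s1 s2 s hs1 hs2 hs _ _ hbi hhi
  have e2 : ψ s j = min (b j ^ s1 * h j ^ (s - s1)) (h j ^ s2 * b j ^ (s - s2)) := by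
    rw [hψ]; exact psi_min s1 s2 s hs1 hs2 hs _ _ hbj hhj
  have e3 : ψ s (i * j) = min ((b i ^ s1 * h i ^ (s - s1)) * (b j ^ s1 * h j ^ (s - s1)))
      ((h i ^ s2 * b i ^ (s - s2)) * (h j ^ s2 * b j ^ (s - s2))) := by
    rw [hψ, psi_min s1 s2 s hs1 hs2 hs _ _ hbij hhij, hbm, hhm,
      Real.mul_rpow hbi.le hbj.le, Real.mul_rpow hhi.le hhj.le,
      Real.mul_rpow hhi.le hhj.le, Real.mul_rpow hbi.le hbj.le]
    ring_nf
  rw [e1, e2, e3]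
  apply le_min
  · exact mul_le_mul (min_le_left _ _) (min_le_left _ _)
      (le_min (by positivity) (by positivity)) (by positivity)
  · exact mul_le_mul (min_le_right _ _) (min_le_right _ _)
      (le_min (by positivity) (by positivity)) (by positivity)
end

section
/- Let $\psi : \mathcal{I}^* \to (0,\infty)$ be submultiplicative ($\psi(\mathbf{ij}) \leq \psi(\mathbf{i})\psi(\mathbf{j})$) on words over a finite alphabet $\mathcal{I}$. Let $A \subseteq \mathcal{I}^*$ be a finite set of words such that every sufficiently long word has a prefix in $A$ (precisely: there is $K$ such that every word of length $\geq K$ has a prefix lying in $A$), and suppose $\sum_{\mathbf{i} \in A} \psi(\mathbf{i}) \leq 1$. Then $\lim_{k \to \infty} (\Psi_k)^{1/k} \leq 1$, where $\Psi_k = \sum_{\mathbf{i} \in \mathcal{I}^k} \psi(\mathbf{i})$. -/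
/-!
Cutting a word of length `k ≥ K` at its prefix `p ∈ A` and using submultiplicativity gives the
renewal inequality `Ψ k ≤ ∑ p ∈ A, ψ p * Ψ (k - |p|)`. Since the prefixes are nonempty and
`∑ p ∈ A, ψ p ≤ 1`, strong induction bounds `Ψ` by `Ψ 0 + ⋯ + Ψ K`, and the `k`-th root of a
bounded sequence has limit at most `1`.
-/

open Finset Filter Topology

section Words

variable {ι : Type*} [Fintype ι]

variable (ι) in
def wordsOfLength (k : ℕ) : Finset (List ι) :=
  (univ : Finset (Fin k → ι)).map ⟨List.ofFn, List.ofFn_injective⟩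

theorem mem_wordsOfLength {k : ℕ} {l : List ι} : l ∈ wordsOfLength ι k ↔ l.length = k := by
  constructor
  · rintro hl
    obtain ⟨w, -, rfl⟩ := mem_map.1 hl
    exact List.length_ofFn
  · rintro rfl
    exact mem_map.2 ⟨l.get, mem_univ _, List.ofFn_get l⟩

theorem sum_wordsOfLength {M : Type*} [AddCommMonoid M] (f : List ι → M) (k : ℕ) :
    ∑ l ∈ wordsOfLength ι k, f l = ∑ w : Fin k → ι, f (List.ofFn w) :=
  sum_map _ _ _

variable [DecidableEq ι] {ψ : List ι → ℝ}

theorem sum_wordsOfLength_filter_prefix_le (h0 : ∀ w, 0 ≤ ψ w)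
    (hsub : ∀ x y : List ι, ψ (x ++ y) ≤ ψ x * ψ y) (p : List ι) (k : ℕ) :
    ∑ l ∈ wordsOfLength ι k with p <+: l, ψ l ≤
      ψ p * ∑ t ∈ wordsOfLength ι (k - p.length), ψ t := by
  have hsubset : {l ∈ wordsOfLength ι k | p <+: l} ⊆
      (wordsOfLength ι (k - p.length)).image (p ++ ·) := by
    intro l hl
    obtain ⟨hlen, t, rfl⟩ := mem_filter.1 hl
    rw [mem_wordsOfLength, List.length_append] at hlen
    exact mem_image.2 ⟨t, mem_wordsOfLength.2 (by omega), rfl⟩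
  calc ∑ l ∈ wordsOfLength ι k with p <+: l, ψ l
      ≤ ∑ l ∈ (wordsOfLength ι (k - p.length)).image (p ++ ·), ψ l :=
        sum_le_sum_of_subset_of_nonneg hsubset fun l _ _ => h0 l
    _ = ∑ t ∈ wordsOfLength ι (k - p.length), ψ (p ++ t) :=
        sum_image fun _ _ _ _ => List.append_cancel_left
    _ ≤ ∑ t ∈ wordsOfLength ι (k - p.length), ψ p * ψ t := sum_le_sum fun t _ => hsub p t
    _ = ψ p * ∑ t ∈ wordsOfLength ι (k - p.length), ψ t := (mul_sum _ _ _).symm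

theorem sum_wordsOfLength_le_of_forall_prefix_mem (h0 : ∀ w, 0 ≤ ψ w)
    (hsub : ∀ x y : List ι, ψ (x ++ y) ≤ ψ x * ψ y) {A : Finset (List ι)} {k : ℕ}
    (hA : ∀ w : List ι, w.length = k → ∃ p ∈ A, p <+: w) :
    ∑ l ∈ wordsOfLength ι k, ψ l ≤
      ∑ p ∈ A, ψ p * ∑ t ∈ wordsOfLength ι (k - p.length), ψ t :=
  calc ∑ l ∈ wordsOfLength ι k, ψ l
      ≤ ∑ l ∈ wordsOfLength ι k, ∑ p ∈ A with p <+: l, ψ l := by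
        gcongr with l hl
        obtain ⟨p, hpA, hpl⟩ := hA l (mem_wordsOfLength.1 hl)
        exact single_le_sum (f := fun _ => ψ l) (fun _ _ => h0 l) (mem_filter.2 ⟨hpA, hpl⟩)
    _ = ∑ p ∈ A, ∑ l ∈ wordsOfLength ι k with p <+: l, ψ l := by
        simp only [sum_filter]
        exact sum_comm
    _ ≤ ∑ p ∈ A, ψ p * ∑ t ∈ wordsOfLength ι (k - p.length), ψ t :=
        sum_le_sum fun p _ => sum_wordsOfLength_filter_prefix_le h0 hsub p k

end Words

theorem le_sum_range_of_le_sum_mul_sub {α : Type*} {u : ℕ → ℝ} {A : Finset α} {a : α → ℝ}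
    {len : α → ℕ} {K : ℕ} (hu : ∀ k, 0 ≤ u k) (ha : ∀ p ∈ A, 0 ≤ a p)
    (hlen : ∀ p ∈ A, 0 < len p) (hsum : ∑ p ∈ A, a p ≤ 1)
    (hrec : ∀ k, K < k → u k ≤ ∑ p ∈ A, a p * u (k - len p)) (k : ℕ) :
    u k ≤ ∑ j ∈ range (K + 1), u j := by
  set B := ∑ j ∈ range (K + 1), u j
  induction k using Nat.strong_induction_on with
  | _ k ih =>
    rcases le_or_gt k K with hk | hk
    · exact single_le_sum (fun j _ => hu j) (mem_range.2 (Nat.lt_succ_of_le hk))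
    · calc u k ≤ ∑ p ∈ A, a p * u (k - len p) := hrec k hk
        _ ≤ ∑ p ∈ A, a p * B := by
          gcongr with p hp
          · exact ha p hp
          · exact ih _ (Nat.sub_lt (by omega) (hlen p hp))
        _ = (∑ p ∈ A, a p) * B := (sum_mul _ _ _).symm
        _ ≤ B := mul_le_of_le_one_left (sum_nonneg fun j _ => hu j) hsum

theorem le_one_of_tendsto_rpow_one_div_of_le {u : ℕ → ℝ} {C L : ℝ} (hu : ∀ k, 0 ≤ u k)
    (hC : ∀ k, u k ≤ C) (hL : Tendsto (fun k : ℕ => u k ^ (1 / (k : ℝ))) atTop (𝓝 L)) :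
    L ≤ 1 := by
  have hC' : 0 < max C 1 := lt_max_of_lt_right one_pos
  have hroot : Tendsto (fun k : ℕ => max C 1 ^ (1 / (k : ℝ))) atTop (𝓝 1) := by
    simpa [Function.comp_def] using ((Real.continuousAt_const_rpow hC'.ne').tendsto.comp
      tendsto_one_div_atTop_nhds_zero_nat)
  exact le_of_tendsto_of_tendsto' hL hroot fun k =>
    Real.rpow_le_rpow (hu k) ((hC k).trans (le_max_left _ _)) (by positivity)

theorem pressure_le_one_of_stopping_general {ι : Type*} [Fintype ι]
    (ψ : List ι → ℝ) (hpos : ∀ w, 0 < ψ w)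
    (hsub : ∀ x y : List ι, ψ (x ++ y) ≤ ψ x * ψ y)
    (A : Finset (List ι)) (hne : ∀ p ∈ A, p ≠ ([] : List ι))
    (K : ℕ) (hK : ∀ w : List ι, K ≤ w.length → ∃ p ∈ A, p <+: w)
    (hsum : ∑ p ∈ A, ψ p ≤ 1)
    (Ψ : ℕ → ℝ) (hΨ : ∀ k, Ψ k = ∑ w : Fin k → ι, ψ (List.ofFn w))
    (L : ℝ)
    (hlim : Filter.Tendsto (fun k : ℕ => (Ψ k) ^ (1 / (k : ℝ)))
      Filter.atTop (nhds L)) :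
    L ≤ 1 := by
  classical
  have h0 : ∀ w, 0 ≤ ψ w := fun w => (hpos w).le
  have hΨ_eq : ∀ k, Ψ k = ∑ l ∈ wordsOfLength ι k, ψ l := fun k =>
    (hΨ k).trans (sum_wordsOfLength ψ k).symm
  have hΨ0 : ∀ k, 0 ≤ Ψ k := fun k => (hΨ_eq k).symm ▸ sum_nonneg fun l _ => h0 l
  have hrenewal : ∀ k, K < k → Ψ k ≤ ∑ p ∈ A, ψ p * Ψ (k - p.length) := by
    intro k hk
    simp only [hΨ_eq]
    exact sum_wordsOfLength_le_of_forall_prefix_mem h0 hsub fun w hw => hK w (hw ▸ hk.le)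
  have hbounded := le_sum_range_of_le_sum_mul_sub hΨ0 (fun p _ => h0 p)
    (fun p hp => List.length_pos_of_ne_nil (hne p hp)) hsum hrenewal
  exact le_one_of_tendsto_rpow_one_div_of_le hΨ0 hbounded hlim

/-- If a finite cross-section `A` of the tree of words (every long enough word
has a prefix in `A`) has section sum at most 1, then the pressure is at most 1. -/
theorem pressure_le_one_of_stopping {ι : Type*} [Fintype ι] [Nonempty ι]
    (ψ : List ι → ℝ) (hpos : ∀ w, 0 < ψ w)
    (hsub : ∀ x y : List ι, ψ (x ++ y) ≤ ψ x * ψ y)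
    (A : Finset (List ι)) (hne : ∀ p ∈ A, p ≠ ([] : List ι))
    (K : ℕ) (hK : ∀ w : List ι, K ≤ w.length → ∃ p ∈ A, p <+: w)
    (hsum : ∑ p ∈ A, ψ p ≤ 1)
    (Ψ : ℕ → ℝ) (hΨ : ∀ k, Ψ k = ∑ w : Fin k → ι, ψ (List.ofFn w))
    (L : ℝ)
    (hlim : Filter.Tendsto (fun k : ℕ => (Ψ k) ^ (1 / (k : ℝ)))
      Filter.atTop (nhds L)) :
    L ≤ 1 :=
  pressure_le_one_of_stopping_general ψ hpos hsub A hne K hK hsum Ψ hΨ L hlim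
end

section
/- Let $F \subseteq \mathbb{R}^2$ be a nonempty compact set, $\delta > 0$, and suppose $F = \bigcup_{j \in J} F_j$ for a finite family of nonempty compact sets $F_j$ such that each closed square of side $\delta$ intersects at most $M$ of the sets $F_j$. Then $\sum_{j \in J} N_\delta(F_j) \leq M \cdot N_\delta(F)$, where $N_\delta$ denotes the number of closed squares in the $\delta$-mesh of $\mathbb{R}^2$ intersecting the set. -/
/-- The number of closed squares in the `δ`-mesh of `ℝ²` intersecting `E`. -/
noncomputable def meshCount (δ : ℝ) (E : Set (ℝ × ℝ)) : ℕ :=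
  Set.ncard {p : ℤ × ℤ |
    ((Set.Icc ((p.1 : ℝ) * δ) ((p.1 : ℝ) * δ + δ) ×ˢ
      Set.Icc ((p.2 : ℝ) * δ) ((p.2 : ℝ) * δ + δ)) ∩ E).Nonempty}

/-- If `F = ⋃ⱼ Fⱼ` and every closed square of side `δ` meets at most `M` of
the sets `Fⱼ`, then `∑ⱼ N_δ(Fⱼ) ≤ M · N_δ(F)`. -/
theorem mesh_count_sum_le {J : Type*} [Fintype J]
    (δ : ℝ) (hδ : 0 < δ) (F : Set (ℝ × ℝ)) (Fj : J → Set (ℝ × ℝ))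
    (hne : ∀ j, (Fj j).Nonempty) (hc : ∀ j, IsCompact (Fj j))
    (hFne : F.Nonempty) (hFc : IsCompact F)
    (hcover : F = ⋃ j : J, Fj j)
    (M : ℕ)
    (hM : ∀ x y : ℝ, Set.ncard {j : J |
      ((Set.Icc x (x + δ) ×ˢ Set.Icc y (y + δ)) ∩ Fj j).Nonempty} ≤ M) :
    ∑ j : J, meshCount δ (Fj j) ≤ M * meshCount δ F := by
  classical
  set Q : ℤ × ℤ → Set (ℝ × ℝ) := fun p =>
    Set.Icc ((p.1 : ℝ) * δ) ((p.1 : ℝ) * δ + δ) ×ˢ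
      Set.Icc ((p.2 : ℝ) * δ) ((p.2 : ℝ) * δ + δ) with hQ
  set S : Set (ℤ × ℤ) := {p | (Q p ∩ F).Nonempty} with hS
  -- F is bounded
  obtain ⟨r, hr⟩ := hFc.isBounded.subset_closedBall 0
  -- S is finite
  have hSfin : S.Finite := by
    apply Set.Finite.subset
      (Set.finite_Icc (⌈(-r - δ) / δ⌉, ⌈(-r - δ) / δ⌉) (⌊r / δ⌋, ⌊r / δ⌋))
    rintro ⟨m, n⟩ ⟨z, hzQ, hzF⟩
    have hz := hr hzF
    rw [Metric.mem_closedBall, Prod.dist_eq, max_le_iff] at hz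
    have h1 : |z.1 - 0| ≤ r := by simpa [Real.dist_eq] using hz.1
    have h2 : |z.2 - 0| ≤ r := by simpa [Real.dist_eq] using hz.2
    rw [sub_zero, abs_le] at h1 h2
    obtain ⟨⟨hm1, hm2⟩, hn1, hn2⟩ := hzQ
    have key : ∀ k : ℤ, ∀ w : ℝ, -r ≤ w → w ≤ r → (k : ℝ) * δ ≤ w →
        w ≤ (k : ℝ) * δ + δ → ⌈(-r - δ) / δ⌉ ≤ k ∧ k ≤ ⌊r / δ⌋ := by
      intro k w hw1 hw2 hk1 hk2
      constructor
      · rw [Int.ceil_le, div_le_iff₀ hδ]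
        nlinarith
      · rw [Int.le_floor, le_div_iff₀ hδ]
        nlinarith
    obtain ⟨a1, a2⟩ := key m z.1 h1.1 h1.2 hm1 hm2
    obtain ⟨b1, b2⟩ := key n z.2 h2.1 h2.2 hn1 hn2
    simp only [Set.mem_Icc, Prod.le_def]
    exact ⟨⟨a1, b1⟩, a2, b2⟩
  have hsub : ∀ j, {p : ℤ × ℤ | (Q p ∩ Fj j).Nonempty} ⊆ S := by
    intro j p ⟨z, hz1, hz2⟩
    exact ⟨z, hz1, hcover ▸ Set.mem_iUnion.2 ⟨j, hz2⟩⟩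
  set T : Finset (ℤ × ℤ) := hSfin.toFinset with hT
  -- each Sj equals a filter of T
  have hj_eq : ∀ j, meshCount δ (Fj j) =
      (T.filter (fun p => (Q p ∩ Fj j).Nonempty)).card := by
    intro j
    rw [meshCount, ← Set.ncard_coe_finset]
    congr 1
    ext p
    simp only [Finset.coe_filter, Set.mem_setOf_eq, hT, Set.Finite.mem_toFinset]
    constructor
    · intro h; exact ⟨hsub j h, h⟩
    · intro h; exact h.2
  have hF_eq : meshCount δ F = T.card := by
    rw [meshCount, ← Set.ncard_coe_finset, hT, Set.Finite.coe_toFinset]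
  calc ∑ j : J, meshCount δ (Fj j)
      = ∑ j : J, (T.filter (fun p => (Q p ∩ Fj j).Nonempty)).card := by
        simp_rw [hj_eq]
    _ = ∑ j : J, ∑ p ∈ T, if (Q p ∩ Fj j).Nonempty then 1 else 0 := by
        simp_rw [Finset.card_filter]
    _ = ∑ p ∈ T, ∑ j : J, if (Q p ∩ Fj j).Nonempty then 1 else 0 :=
        Finset.sum_comm
    _ ≤ ∑ p ∈ T, M := by
        apply Finset.sum_le_sum
        intro p _
        have := hM ((p.1 : ℝ) * δ) ((p.2 : ℝ) * δ)
        calc ∑ j : J, (if (Q p ∩ Fj j).Nonempty then 1 else 0)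
            = (Finset.univ.filter (fun j => (Q p ∩ Fj j).Nonempty)).card := by
              rw [Finset.card_filter]
          _ = Set.ncard {j : J | ((Set.Icc ((p.1 : ℝ) * δ) ((p.1 : ℝ) * δ + δ) ×ˢ
                Set.Icc ((p.2 : ℝ) * δ) ((p.2 : ℝ) * δ + δ)) ∩ Fj j).Nonempty} := by
              rw [← Set.ncard_coe_finset]
              congr 1
              ext j
              simp [hQ]
          _ ≤ M := hM _ _
    _ = M * T.card := by rw [Finset.sum_const, smul_eq_mul, mul_comm]
    _ = M * meshCount δ F := by rw [hF_eq]
end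

section
/- Let $F$ be the attractor of a box-like IFS $\{S_i\}_{i\in\mathcal{I}}$ with $\mathcal{I} = \mathcal{I}_A \cup \mathcal{I}_B$, where maps in $\mathcal{I}_A$ send horizontal lines to horizontal lines and maps in $\mathcal{I}_B$ send horizontal lines to vertical lines. Set $X = \pi_1(F)$, $Y = \pi_2(F)$ and for $a, b \in \{1,2\}$ define $\tilde S_i^{a,b} = \pi_a \circ S_i \circ \mathbb{I}_b$, where $\mathbb{I}_1(x) = (x,0)$, $\mathbb{I}_2(y) = (0,y)$. Then $X = (\bigcup_{i\in\mathcal{I}_A}\tilde S_i^{1,1}(X)) \cup (\bigcup_{i\in\mathcal{I}_B}\tilde S_i^{1,2}(Y))$ and $Y = (\bigcup_{i\in\mathcal{I}_A}\tilde S_i^{2,2}(Y)) \cup (\bigcup_{i\in\mathcal{I}_B}\tilde S_i^{2,1}(X))$, and each of the maps $\tilde S_i^{a,b}$ appearing in these unions is a contracting similarity of $\mathbb{R}$. -/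
lemma abs_aux {e u : ℝ} (he : |e| = 1) (h1 : |e + u| ≤ 1) (h2 : |e - u| ≤ 1) : u = 0 := by
  have he2 : e ^ 2 = 1 := by
    have := sq_abs e; rw [he] at this; linarith [this]
  have h1' := abs_le.mp h1
  have h2' := abs_le.mp h2
  nlinarith [sq_nonneg u]

lemma key_lin (M : ℝ × ℝ →ₗ[ℝ] ℝ × ℝ) (hM : Isometry M) (h2 : (M (1, 0)).2 = 0) :
    (M (0, 1)).1 = 0 ∧ |(M (1, 0)).1| = 1 ∧ |(M (0, 1)).2| = 1 := by
  have hn : ∀ p : ℝ × ℝ, ‖M p‖ = ‖p‖ := hM.norm_map_of_map_zero (map_zero M)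
  have h10 : ‖M (1, 0)‖ = 1 := by rw [hn]; simp [Prod.norm_def]
  have he : |(M (1, 0)).1| = 1 := by
    rw [Prod.norm_def, Real.norm_eq_abs, Real.norm_eq_abs, h2] at h10
    simpa using h10
  set e := (M (1, 0)).1
  set u := (M (0, 1)).1
  set v := (M (0, 1)).2
  have hadd : M (1, 1) = M (1, 0) + M (0, 1) := by
    rw [← map_add]; norm_num
  have hsub : M (1, -1) = M (1, 0) - M (0, 1) := by
    rw [← map_sub]; norm_num
  have h11 : ‖M ((1 : ℝ), (1 : ℝ))‖ = 1 := by rw [hn]; simp [Prod.norm_def]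
  have h1m1 : ‖M ((1 : ℝ), (-1 : ℝ))‖ = 1 := by rw [hn]; simp [Prod.norm_def]
  have hle1 : |e + u| ≤ 1 := by
    have h : ‖M (1, 0) + M (0, 1)‖ = 1 := by rw [← hadd]; exact h11
    rw [Prod.norm_def] at h
    have h' : ‖(M (1, 0) + M (0, 1)).1‖ ≤ 1 := le_trans (le_max_left _ _) h.le
    simpa [Real.norm_eq_abs, Prod.fst_add] using h'
  have hle2 : |e - u| ≤ 1 := by
    have h : ‖M (1, 0) - M (0, 1)‖ = 1 := by rw [← hsub]; exact h1m1
    rw [Prod.norm_def] at h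
    have h' : ‖(M (1, 0) - M (0, 1)).1‖ ≤ 1 := le_trans (le_max_left _ _) h.le
    simpa [Real.norm_eq_abs, Prod.fst_sub] using h'
  have hu : u = 0 := abs_aux he hle1 hle2
  refine ⟨hu, he, ?_⟩
  have h01 : ‖M ((0 : ℝ), (1 : ℝ))‖ = 1 := by rw [hn]; simp [Prod.norm_def]
  rw [Prod.norm_def, Real.norm_eq_abs, Real.norm_eq_abs] at h01
  rw [show (M (0,1)).1 = u from rfl, hu] at h01
  simpa using h01

lemma key_lin' (M : ℝ × ℝ →ₗ[ℝ] ℝ × ℝ) (hM : Isometry M) (h1 : (M (1, 0)).1 = 0) :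
    (M (0, 1)).2 = 0 ∧ |(M (1, 0)).2| = 1 ∧ |(M (0, 1)).1| = 1 := by
  have hswap : Isometry (fun p : ℝ × ℝ => (p.2, p.1)) := by
    intro p q
    simp [Prod.edist_eq, max_comm]
  let N : ℝ × ℝ →ₗ[ℝ] ℝ × ℝ :=
    { toFun := fun p => ((M p).2, (M p).1)
      map_add' := by intros; simp
      map_smul' := by intros; simp }
  have hN : Isometry N := hswap.comp hM
  have hN2 : (N (1, 0)).2 = 0 := h1
  obtain ⟨h1', h2', h3'⟩ := key_lin N hN hN2
  exact ⟨h1', h2', h3'⟩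

lemma dist_affine (c d k : ℝ) (hk : |k| = 1) (x y : ℝ) :
    dist (c * (x * k) + d) (c * (y * k) + d) = |c| * dist x y := by
  rw [Real.dist_eq, Real.dist_eq]
  have h : c * (x * k) + d - (c * (y * k) + d) = c * k * (x - y) := by ring
  rw [h, abs_mul, abs_mul, hk, mul_one]

/-- The projections `X = π₁(F)`, `Y = π₂(F)` of a box-like self-affine set form
a graph-directed system of self-similar sets under the contracting similarities
`π_a ∘ Sᵢ ∘ 𝕀_b`. -/
theorem projections_graph_directed {ι : Type*} [Fintype ι] [Nonempty ι]
    (a b : ι → ℝ) (ha : ∀ i, a i ∈ Set.Ioo (0:ℝ) 1) (hb : ∀ i, b i ∈ Set.Ioo (0:ℝ) 1)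
    (L : ι → (ℝ × ℝ →ₗ[ℝ] ℝ × ℝ)) (hL : ∀ i, Isometry (L i))
    (hLsq : ∀ i, L i '' Set.Icc ((-1, -1) : ℝ × ℝ) (1, 1) = Set.Icc (-1, -1) (1, 1))
    (t : ι → ℝ × ℝ) (S : ι → ℝ × ℝ → ℝ × ℝ)
    (hS : ∀ i p, S i p = (a i * (L i p).1, b i * (L i p).2) + t i)
    (IA IB : Set ι)
    (hcover : ∀ i, i ∈ IA ∨ i ∈ IB) (hdisj : Disjoint IA IB)
    (hA : ∀ i ∈ IA, ∀ p q : ℝ × ℝ, p.2 = q.2 → (S i p).2 = (S i q).2)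
    (hB : ∀ i ∈ IB, ∀ p q : ℝ × ℝ, p.2 = q.2 → (S i p).1 = (S i q).1)
    (F : Set (ℝ × ℝ)) (hFne : F.Nonempty) (hFc : IsCompact F)
    (hFinv : F = ⋃ i : ι, S i '' F)
    (X Y : Set ℝ) (hX : X = Prod.fst '' F) (hY : Y = Prod.snd '' F) :
    X = (⋃ i ∈ IA, (fun x : ℝ => (S i (x, 0)).1) '' X) ∪
        (⋃ i ∈ IB, (fun y : ℝ => (S i (0, y)).1) '' Y) ∧
    Y = (⋃ i ∈ IA, (fun y : ℝ => (S i (0, y)).2) '' Y) ∪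
        (⋃ i ∈ IB, (fun x : ℝ => (S i (x, 0)).2) '' X) ∧
    (∀ i ∈ IA,
      (∃ r : ℝ, 0 < r ∧ r < 1 ∧
        ∀ x y : ℝ, dist ((S i (x, 0)).1) ((S i (y, 0)).1) = r * dist x y) ∧
      (∃ r : ℝ, 0 < r ∧ r < 1 ∧
        ∀ x y : ℝ, dist ((S i (0, x)).2) ((S i (0, y)).2) = r * dist x y)) ∧
    (∀ i ∈ IB,
      (∃ r : ℝ, 0 < r ∧ r < 1 ∧
        ∀ x y : ℝ, dist ((S i (0, x)).1) ((S i (0, y)).1) = r * dist x y) ∧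
      (∃ r : ℝ, 0 < r ∧ r < 1 ∧
        ∀ x y : ℝ, dist ((S i (x, 0)).2) ((S i (y, 0)).2) = r * dist x y)) := by
  -- basic coordinate formulas
  have hfst : ∀ i p, (S i p).1 = a i * (L i p).1 + (t i).1 := by
    intro i p; rw [hS]; rfl
  have hsnd : ∀ i p, (S i p).2 = b i * (L i p).2 + (t i).2 := by
    intro i p; rw [hS]; rfl
  have hLsplit : ∀ i (p : ℝ × ℝ), L i p = p.1 • L i (1, 0) + p.2 • L i (0, 1) := by
    intro i p
    rw [← map_smul, ← map_smul, ← map_add]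
    congr 1
    ext <;> simp
  -- facts for i ∈ IA
  have hA2 : ∀ i ∈ IA, (L i (1, 0)).2 = 0 := by
    intro i hi
    have h := hA i hi (1, 0) (0, 0) rfl
    rw [hsnd, hsnd] at h
    have h0 : L i ((0 : ℝ), (0 : ℝ)) = 0 := map_zero (L i)
    rw [h0] at h
    simp only [Prod.snd_zero, mul_zero] at h
    have hb0 : b i ≠ 0 := ne_of_gt (hb i).1
    have := add_right_cancel h
    exact (mul_eq_zero.mp this).resolve_left hb0
  have hAkey : ∀ i ∈ IA,
      (L i (0, 1)).1 = 0 ∧ |(L i (1, 0)).1| = 1 ∧ |(L i (0, 1)).2| = 1 :=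
    fun i hi => key_lin (L i) (hL i) (hA2 i hi)
  -- facts for i ∈ IB
  have hB1 : ∀ i ∈ IB, (L i (1, 0)).1 = 0 := by
    intro i hi
    have h := hB i hi (1, 0) (0, 0) rfl
    rw [hfst, hfst] at h
    have h0 : L i ((0 : ℝ), (0 : ℝ)) = 0 := map_zero (L i)
    rw [h0] at h
    simp only [Prod.fst_zero, mul_zero] at h
    have ha0 : a i ≠ 0 := ne_of_gt (ha i).1
    have := add_right_cancel h
    exact (mul_eq_zero.mp this).resolve_left ha0
  have hBkey : ∀ i ∈ IB,
      (L i (0, 1)).2 = 0 ∧ |(L i (1, 0)).2| = 1 ∧ |(L i (0, 1)).1| = 1 :=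
    fun i hi => key_lin' (L i) (hL i) (hB1 i hi)
  -- projection formulas
  have hIA1 : ∀ i ∈ IA, ∀ p : ℝ × ℝ, (S i p).1 = (S i (p.1, 0)).1 := by
    intro i hi p
    rw [hfst, hfst]
    congr 2
    rw [hLsplit i p]
    conv_rhs => rw [hLsplit i (p.1, 0)]
    simp [(hAkey i hi).1]
  have hIA2 : ∀ i ∈ IA, ∀ p : ℝ × ℝ, (S i p).2 = (S i (0, p.2)).2 := by
    intro i hi p
    exact hA i hi p (0, p.2) rfl
  have hIB1 : ∀ i ∈ IB, ∀ p : ℝ × ℝ, (S i p).1 = (S i (0, p.2)).1 := by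
    intro i hi p
    exact hB i hi p (0, p.2) rfl
  have hIB2 : ∀ i ∈ IB, ∀ p : ℝ × ℝ, (S i p).2 = (S i (p.1, 0)).2 := by
    intro i hi p
    rw [hsnd, hsnd]
    congr 2
    rw [hLsplit i p]
    conv_rhs => rw [hLsplit i (p.1, 0)]
    simp [(hBkey i hi).1]
  have hmemF : ∀ i p, p ∈ F → S i p ∈ F := by
    intro i p hp
    rw [hFinv]
    exact Set.mem_iUnion.2 ⟨i, Set.mem_image_of_mem _ hp⟩
  -- first set equality
  have hXeq : X = (⋃ i ∈ IA, (fun x : ℝ => (S i (x, 0)).1) '' X) ∪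
      (⋃ i ∈ IB, (fun y : ℝ => (S i (0, y)).1) '' Y) := by
    ext x
    constructor
    · intro hx
      rw [hX] at hx
      obtain ⟨p, hpF, rfl⟩ := hx
      rw [hFinv] at hpF
      obtain ⟨i, q, hqF, rfl⟩ := Set.mem_iUnion.mp hpF
      rcases hcover i with hi | hi
      · exact Or.inl (Set.mem_biUnion hi ⟨q.1, hX ▸ ⟨q, hqF, rfl⟩, (hIA1 i hi q).symm⟩)
      · exact Or.inr (Set.mem_biUnion hi ⟨q.2, hY ▸ ⟨q, hqF, rfl⟩, (hIB1 i hi q).symm⟩)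
    · rintro (hx | hx)
      · rw [Set.mem_iUnion₂] at hx
        obtain ⟨i, hi, x', hx', hfx⟩ := hx
        rw [hX] at hx' ⊢
        obtain ⟨q, hqF, rfl⟩ := hx'
        exact ⟨S i q, hmemF i q hqF, by rw [← hfx]; exact hIA1 i hi q⟩
      · rw [Set.mem_iUnion₂] at hx
        obtain ⟨i, hi, y', hy', hfy⟩ := hx
        rw [hY] at hy'
        rw [hX]
        obtain ⟨q, hqF, rfl⟩ := hy'
        exact ⟨S i q, hmemF i q hqF, by rw [← hfy]; exact hIB1 i hi q⟩
  -- second set equality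
  have hYeq : Y = (⋃ i ∈ IA, (fun y : ℝ => (S i (0, y)).2) '' Y) ∪
      (⋃ i ∈ IB, (fun x : ℝ => (S i (x, 0)).2) '' X) := by
    ext y
    constructor
    · intro hy
      rw [hY] at hy
      obtain ⟨p, hpF, rfl⟩ := hy
      rw [hFinv] at hpF
      obtain ⟨i, q, hqF, rfl⟩ := Set.mem_iUnion.mp hpF
      rcases hcover i with hi | hi
      · exact Or.inl (Set.mem_biUnion hi ⟨q.2, hY ▸ ⟨q, hqF, rfl⟩, (hIA2 i hi q).symm⟩)
      · exact Or.inr (Set.mem_biUnion hi ⟨q.1, hX ▸ ⟨q, hqF, rfl⟩, (hIB2 i hi q).symm⟩)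
    · rintro (hy | hy)
      · rw [Set.mem_iUnion₂] at hy
        obtain ⟨i, hi, y', hy', hfy⟩ := hy
        rw [hY] at hy' ⊢
        obtain ⟨q, hqF, rfl⟩ := hy'
        exact ⟨S i q, hmemF i q hqF, by rw [← hfy]; exact hIA2 i hi q⟩
      · rw [Set.mem_iUnion₂] at hy
        obtain ⟨i, hi, x', hx', hfx⟩ := hy
        rw [hX] at hx'
        rw [hY]
        obtain ⟨q, hqF, rfl⟩ := hx'
        exact ⟨S i q, hmemF i q hqF, by rw [← hfx]; exact hIB2 i hi q⟩
  -- coordinate similarity formulas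
  have hfor1 : ∀ i (z : ℝ), (S i (z, 0)).1 = a i * (z * (L i (1, 0)).1) + (t i).1 := by
    intro i z
    rw [hfst]
    congr 2
    rw [hLsplit i (z, 0)]
    simp
  have hfor2 : ∀ i (z : ℝ), (S i (z, 0)).2 = b i * (z * (L i (1, 0)).2) + (t i).2 := by
    intro i z
    rw [hsnd]
    congr 2
    rw [hLsplit i (z, 0)]
    simp
  have hfor3 : ∀ i (z : ℝ), (S i (0, z)).1 = a i * (z * (L i (0, 1)).1) + (t i).1 := by
    intro i z
    rw [hfst]
    congr 2
    rw [hLsplit i (0, z)]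
    simp
  have hfor4 : ∀ i (z : ℝ), (S i (0, z)).2 = b i * (z * (L i (0, 1)).2) + (t i).2 := by
    intro i z
    rw [hsnd]
    congr 2
    rw [hLsplit i (0, z)]
    simp
  refine ⟨hXeq, hYeq, ?_, ?_⟩
  · intro i hi
    constructor
    · refine ⟨a i, (ha i).1, (ha i).2, fun x y => ?_⟩
      rw [hfor1, hfor1, dist_affine _ _ _ (hAkey i hi).2.1, abs_of_pos (ha i).1]
    · refine ⟨b i, (hb i).1, (hb i).2, fun x y => ?_⟩
      rw [hfor4, hfor4, dist_affine _ _ _ (hAkey i hi).2.2, abs_of_pos (hb i).1]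
  · intro i hi
    constructor
    · refine ⟨a i, (ha i).1, (ha i).2, fun x y => ?_⟩
      rw [hfor3, hfor3, dist_affine _ _ _ (hBkey i hi).2.2, abs_of_pos (ha i).1]
    · refine ⟨b i, (hb i).1, (hb i).2, fun x y => ?_⟩
      rw [hfor2, hfor2, dist_affine _ _ _ (hBkey i hi).2.1, abs_of_pos (hb i).1]
end
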